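/- (Proposition 4.) Let (A^F, R^F, A^?, R^?, R^↔) be a rich incomplete AF, let v_rIAF = AW_{A^F} ∪ ATT_{R^F}, and let makeComp^rIAF = mkTrueSome(AW_{A^?}); mkTrueSome(ATT_{R^?}); dis(ATT_{R^↔}). Then: (i) if (v_rIAF, v) ∈ ‖makeComp^rIAF‖ then (A_v, R_v) is a completion of (A^F, R^F, A^?, R^?, R^↔); and (ii) for every completion (A*, R*) of (A^F, R^F, A^?, R^?, R^↔) there is a valuation v with (v_rIAF, v) ∈ ‖makeComp^rIAF‖ and (A_v, R_v) = (A*, R*). -/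
import Mathlib


noncomputable section

namespace DLPA

/-- Propositional variables: awareness, acceptance, attack, auxiliary acceptance
copies, plus countably many further auxiliary variables. -/
inductive PVar (U : Type) : Type
  | aw : U → PVar U
  | inn : U → PVar U
  | att : U → U → PVar U
  | inn' : U → PVar U
  | aux : Nat → PVar U

-- DL-PA formulas and programs, by mutual recursion.
mutual
  inductive Form (U : Type) : Type
    | var : PVar U → Form U
    | neg : Form U → Form U
    | conj : Form U → Form U → Form U
    | box : Prog U → Form U → Form U
  inductive Prog (U : Type) : Type
    | add : PVar U → Prog U           -- +p
    | rem : PVar U → Prog U           -- −p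
    | test : Form U → Prog U          -- φ?
    | seq : Prog U → Prog U → Prog U
    | choice : Prog U → Prog U → Prog U
    | conv : Prog U → Prog U
end

variable {U : Type}

/-- A valuation is a set of propositional variables. -/
abbrev Val (U : Type) := Set (PVar U)

-- Satisfaction of formulas and interpretation of programs, by mutual recursion.
mutual
  def Sat : Val U → Form U → Prop
    | v, Form.var p => p ∈ v
    | v, Form.neg φ => ¬ Sat v φ
    | v, Form.conj φ ψ => Sat v φ ∧ Sat v ψ
    | v, Form.box π φ => ∀ w, Rel π v w → Sat w φ
  def Rel : Prog U → Val U → Val U → Prop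
    | Prog.add p, v, w => w = v ∪ {p}
    | Prog.rem p, v, w => w = v \ {p}
    | Prog.test φ, v, w => w = v ∧ Sat v φ
    | Prog.seq π₁ π₂, v, w => ∃ u, Rel π₁ v u ∧ Rel π₂ u w
    | Prog.choice π₁ π₂, v, w => Rel π₁ v w ∨ Rel π₂ v w
    | Prog.conv π, v, w => Rel π w v
end

def Form.falsum : Form U := Form.conj (Form.var (PVar.aux 0)) (Form.neg (Form.var (PVar.aux 0)))
def Form.top : Form U := Form.neg Form.falsum
def Form.impl (φ ψ : Form U) : Form U := Form.neg (Form.conj φ (Form.neg ψ))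
def Form.disj (φ ψ : Form U) : Form U := Form.neg (Form.conj (Form.neg φ) (Form.neg ψ))
def Form.equiv (φ ψ : Form U) : Form U := Form.conj (Form.impl φ ψ) (Form.impl ψ φ)
def Form.dia (π : Prog U) (φ : Form U) : Form U := Form.neg (Form.box π (Form.neg φ))
def Prog.skip : Prog U := Prog.test Form.top

/-- Sequential composition of a list of programs (`skip` for the empty list). -/
def seqList {β : Type} (f : β → Prog U) : List β → Prog U
  | [] => Prog.skip
  | p :: ps => Prog.seq (f p) (seqList f ps)

/-- Nondeterministic composition of a list of programs (`skip` for the empty list). -/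
def unionList {β : Type} (f : β → Prog U) : List β → Prog U
  | [] => Prog.skip
  | [p] => f p
  | p :: ps => Prog.choice (f p) (unionList f ps)

def mkTrueOne (L : List (PVar U)) : Prog U :=
  unionList (fun p => Prog.seq (Prog.test (Form.neg (Form.var p))) (Prog.add p)) L
def mkFalseOne (L : List (PVar U)) : Prog U :=
  unionList (fun p => Prog.seq (Prog.test (Form.var p)) (Prog.rem p)) L
def mkTrueSome (L : List (PVar U)) : Prog U :=
  seqList (fun p => Prog.choice (Prog.add p) Prog.skip) L
def mkFalseSome (L : List (PVar U)) : Prog U :=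
  seqList (fun p => Prog.choice (Prog.rem p) Prog.skip) L
def vary (L : List (PVar U)) : Prog U :=
  seqList (fun p => Prog.choice (Prog.add p) (Prog.rem p)) L
/-- dis(ATT_R): for each pair (x,y) in the list, make true att_{x,y} or att_{y,x}. -/
def dis (L : List (U × U)) : Prog U :=
  seqList (fun q => Prog.choice (Prog.add (PVar.att q.1 q.2)) (Prog.add (PVar.att q.2 q.1))) L

def conjList : List (Form U) → Form U
  | [] => Form.top
  | φ :: φs => Form.conj φ (conjList φs)
def disjList : List (Form U) → Form U
  | [] => Form.falsum
  | φ :: φs => Form.disj φ (disjList φs)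

/-- The elements of a finite universe in a fixed order. -/
def enum (U : Type) [Fintype U] : List U := Finset.univ.toList

def bigConj [Fintype U] (f : U → Form U) : Form U := conjList ((enum U).map f)
def bigDisj [Fintype U] (f : U → Form U) : Form U := disjList ((enum U).map f)

def INlist (U : Type) [Fintype U] : List (PVar U) := (enum U).map PVar.inn

/-- copy(IN_U) copies the value of in_x to in'_x, for every x ∈ U. -/
def copyIN (U : Type) [Fintype U] : Prog U :=
  seqList (fun x => Prog.choice
      (Prog.seq (Prog.test (Form.var (PVar.inn x))) (Prog.add (PVar.inn' x)))
      (Prog.seq (Prog.test (Form.neg (Form.var (PVar.inn x)))) (Prog.rem (PVar.inn' x))))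
    (enum U)

def Well (U : Type) [Fintype U] : Form U :=
  bigConj (fun x => Form.impl (Form.var (PVar.inn x)) (Form.var (PVar.aw x)))

def ConFree (U : Type) [Fintype U] : Form U :=
  Form.conj (Well U) (bigConj fun x => bigConj fun y =>
    Form.neg (Form.conj (Form.var (PVar.inn x))
      (Form.conj (Form.var (PVar.inn y)) (Form.var (PVar.att x y)))))

def AdmissibleF (U : Type) [Fintype U] : Form U :=
  Form.conj (ConFree U) (bigConj fun x => Form.impl (Form.var (PVar.inn x))
    (bigConj fun y => Form.impl (Form.conj (Form.var (PVar.aw y)) (Form.var (PVar.att y x)))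
      (bigDisj fun z => Form.conj (Form.var (PVar.inn z)) (Form.var (PVar.att z y)))))

def StableF (U : Type) [Fintype U] : Form U :=
  Form.conj (Well U) (bigConj fun x => Form.impl (Form.var (PVar.aw x))
    (Form.equiv (Form.var (PVar.inn x))
      (Form.neg (bigDisj fun y => Form.conj (Form.var (PVar.inn y)) (Form.var (PVar.att y x))))))

def CompleteF (U : Type) [Fintype U] : Form U :=
  Form.conj (ConFree U) (bigConj fun x => Form.equiv (Form.var (PVar.inn x))
    (bigConj fun y => Form.impl (Form.conj (Form.var (PVar.aw y)) (Form.var (PVar.att y x)))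
      (bigDisj fun z => Form.conj (Form.var (PVar.inn z)) (Form.var (PVar.att z y)))))

def GroundedF (U : Type) [Fintype U] : Form U :=
  Form.conj (CompleteF U)
    (Form.box (Prog.seq (mkFalseOne (INlist U)) (mkFalseSome (INlist U))) (Form.neg (CompleteF U)))

def PreferredF (U : Type) [Fintype U] : Form U :=
  Form.conj (AdmissibleF U)
    (Form.box (Prog.seq (mkTrueOne (INlist U)) (mkTrueSome (INlist U))) (Form.neg (AdmissibleF U)))

def NaiveF (U : Type) [Fintype U] : Form U :=
  Form.conj (ConFree U) (Form.box (mkTrueOne (INlist U)) (Form.neg (ConFree U)))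

def IncludedInCp (U : Type) [Fintype U] : Form U :=
  bigConj fun x => Form.impl
    (Form.disj (Form.var (PVar.inn x)) (Form.conj (Form.var (PVar.aw x))
      (bigDisj fun y => Form.conj (Form.var (PVar.inn y)) (Form.var (PVar.att y x)))))
    (Form.disj (Form.var (PVar.inn' x)) (Form.conj (Form.var (PVar.aw x))
      (bigDisj fun y => Form.conj (Form.var (PVar.inn' y)) (Form.var (PVar.att y x)))))

def IncludesCp (U : Type) [Fintype U] : Form U :=
  bigConj fun x => Form.impl
    (Form.disj (Form.var (PVar.inn' x)) (Form.conj (Form.var (PVar.aw x))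
      (bigDisj fun y => Form.conj (Form.var (PVar.inn' y)) (Form.var (PVar.att y x)))))
    (Form.disj (Form.var (PVar.inn x)) (Form.conj (Form.var (PVar.aw x))
      (bigDisj fun y => Form.conj (Form.var (PVar.inn y)) (Form.var (PVar.att y x)))))

/-- makeExt^σ = vary(IN_U); φ_σ? -/
def makeExt (U : Type) [Fintype U] (φ : Form U) : Prog U :=
  Prog.seq (vary (INlist U)) (Prog.test φ)

def SemiStableF (U : Type) [Fintype U] : Form U :=
  Form.conj (CompleteF U)
    (Form.box (Prog.seq (copyIN U) (makeExt U (CompleteF U)))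
      (Form.impl (IncludesCp U) (IncludedInCp U)))

/-- A_v -/
def Av (v : Val U) : Set U := {x | PVar.aw x ∈ v}
/-- R_v -/
def Rv (v : Val U) : Set (U × U) := {q | q.1 ∈ Av v ∧ q.2 ∈ Av v ∧ PVar.att q.1 q.2 ∈ v}
/-- E(v) -/
def Ev (v : Val U) : Set U := {x | PVar.inn x ∈ v}
/-- {x ∈ U : in'_x ∈ v} -/
def Cv (v : Val U) : Set U := {x | PVar.inn' x ∈ v}
/-- v_(A,R) = AW_A ∪ ATT_R -/
def valOf (A : Set U) (R : Set (U × U)) : Val U :=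
  (PVar.aw '' A) ∪ ((fun q : U × U => PVar.att q.1 q.2) '' R)

/-- E⁺, the set of arguments of A attacked by E in (A,R). -/
def attacked (A : Set U) (R : Set (U × U)) (E : Set U) : Set U :=
  {x ∈ A | ∃ y ∈ E, (y, x) ∈ R}
/-- E⊕ = E ∪ E⁺, the range of E. -/
def rangeOf (A : Set U) (R : Set (U × U)) (E : Set U) : Set U :=
  E ∪ attacked A R E

def IsConflictFree (A : Set U) (R : Set (U × U)) (E : Set U) : Prop :=
  E ⊆ A ∧ E ∩ attacked A R E = ∅
def Defends (A : Set U) (R : Set (U × U)) (E : Set U) (a : U) : Prop :=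
  ∀ x ∈ A, (x, a) ∈ R → x ∈ attacked A R E
def IsAdmissibleExt (A : Set U) (R : Set (U × U)) (E : Set U) : Prop :=
  IsConflictFree A R E ∧ ∀ a ∈ E, Defends A R E a
def IsStableExt (A : Set U) (R : Set (U × U)) (E : Set U) : Prop :=
  IsConflictFree A R E ∧ A \ E ⊆ attacked A R E
def IsCompleteExt (A : Set U) (R : Set (U × U)) (E : Set U) : Prop :=
  IsConflictFree A R E ∧ E = {a ∈ A | Defends A R E a}
def IsGroundedExt (A : Set U) (R : Set (U × U)) (E : Set U) : Prop :=
  IsCompleteExt A R E ∧ ∀ E', IsCompleteExt A R E' → E' ⊆ E → E' = E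
def IsPreferredExt (A : Set U) (R : Set (U × U)) (E : Set U) : Prop :=
  IsCompleteExt A R E ∧ ∀ E', IsCompleteExt A R E' → E ⊆ E' → E' = E
def IsNaiveExt (A : Set U) (R : Set (U × U)) (E : Set U) : Prop :=
  IsConflictFree A R E ∧ ∀ E', IsConflictFree A R E' → E ⊆ E' → E' = E
def IsSemiStableExt (A : Set U) (R : Set (U × U)) (E : Set U) : Prop :=
  IsCompleteExt A R E ∧ ¬ ∃ E', IsCompleteExt A R E' ∧ rangeOf A R E ⊂ rangeOf A R E'

end DLPA

end

noncomputable section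
open DLPA

/-- The list of awareness variables of a finite set of arguments, in a fixed order. -/
def AWlist {U : Type} (A : Finset U) : List (PVar U) := A.toList.map PVar.aw
/-- The list of attack variables of a finite attack relation, in a fixed order. -/
def ATTlist {U : Type} (R : Finset (U × U)) : List (PVar U) :=
  R.toList.map (fun q => PVar.att q.1 q.2)

/-- The defining conditions of an incomplete AF (A^F, R^F, A^?, R^?). -/
def IAFConds {U : Type} (AF Aq : Set U) (RF Rq : Set (U × U)) : Prop :=
  Disjoint AF Aq ∧ Disjoint RF Rq ∧
    RF ⊆ (AF ∪ Aq) ×ˢ (AF ∪ Aq) ∧ Rq ⊆ (AF ∪ Aq) ×ˢ (AF ∪ Aq)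

/-- (A*, R*) is a completion of the IAF (A^F, R^F, A^?, R^?). -/
def IsCompletionOfIAF {U : Type} (AF Aq : Set U) (RF Rq : Set (U × U))
    (As : Set U) (Rs : Set (U × U)) : Prop :=
  AF ⊆ As ∧ As ⊆ AF ∪ Aq ∧
    RF ∩ As ×ˢ As ⊆ Rs ∧ Rs ⊆ (RF ∪ Rq) ∩ As ×ˢ As

end

noncomputable section
open DLPA

/-- The defining conditions of a rich incomplete AF (A^F, R^F, A^?, R^?, R^↔). -/
def RIAFConds {U : Type} (AF Aq : Set U) (RF Rq Rl : Set (U × U)) : Prop :=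
  Disjoint AF Aq ∧ Disjoint RF Rq ∧ Disjoint RF Rl ∧ Disjoint Rq Rl ∧
    RF ⊆ (AF ∪ Aq) ×ˢ (AF ∪ Aq) ∧ Rq ⊆ (AF ∪ Aq) ×ˢ (AF ∪ Aq) ∧
    Rl ⊆ (AF ∪ Aq) ×ˢ (AF ∪ Aq) ∧
    (∀ x y, (x, y) ∈ Rl → (y, x) ∈ Rl) ∧ (∀ x, (x, x) ∉ Rl)

/-- (A*, R*) is a completion of the rIAF (A^F, R^F, A^?, R^?, R^↔). -/
def IsCompletionOfRIAF {U : Type} (AF Aq : Set U) (RF Rq Rl : Set (U × U))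
    (As : Set U) (Rs : Set (U × U)) : Prop :=
  AF ⊆ As ∧ As ⊆ AF ∪ Aq ∧
    RF ∩ As ×ˢ As ⊆ Rs ∧ Rs ⊆ (RF ∪ Rq ∪ Rl) ∩ As ×ˢ As ∧
    ∀ x y, x ∈ As → y ∈ As → (x, y) ∈ Rl → ((x, y) ∈ Rs ∨ (y, x) ∈ Rs)

end

noncomputable section Helpers
open DLPA

variable {U : Type}

lemma sat_top (v : Val U) : Sat v Form.top := by
  simp [Form.top, Form.falsum, DLPA.Sat]

lemma rel_skip (v w : Val U) : Rel Prog.skip v w ↔ w = v := by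
  rw [Prog.skip, DLPA.Rel]
  simp [sat_top]

lemma rel_add (p : PVar U) (v w : Val U) : Rel (Prog.add p) v w ↔ w = v ∪ {p} := by
  rw [DLPA.Rel]

lemma rel_choice (π₁ π₂ : Prog U) (v w : Val U) :
    Rel (Prog.choice π₁ π₂) v w ↔ Rel π₁ v w ∨ Rel π₂ v w := by
  rw [DLPA.Rel]

lemma rel_seq (π₁ π₂ : Prog U) (v w : Val U) :
    Rel (Prog.seq π₁ π₂) v w ↔ ∃ u, Rel π₁ v u ∧ Rel π₂ u w := by
  rw [DLPA.Rel]

lemma rel_mkTrueSome (L : List (PVar U)) (v w : Val U) :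
    Rel (mkTrueSome L) v w ↔ v ⊆ w ∧ w ⊆ v ∪ {p | p ∈ L} := by
  induction L generalizing v with
  | nil =>
    rw [mkTrueSome, seqList, rel_skip]
    constructor
    · rintro rfl; exact ⟨subset_rfl, by simp⟩
    · rintro ⟨h1, h2⟩
      apply Set.Subset.antisymm _ h1
      intro p hp
      rcases h2 hp with h | h
      · exact h
      · simp at h
  | cons p L ih =>
    rw [mkTrueSome, seqList]
    rw [show seqList (fun p => Prog.choice (Prog.add p) Prog.skip) L = mkTrueSome L from rfl]
    rw [rel_seq]
    constructor
    · rintro ⟨u, hu, hrest⟩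
      obtain ⟨h1, h2⟩ := (ih u).mp hrest
      rw [rel_choice, rel_add, rel_skip] at hu
      rcases hu with hu | hu
      · subst hu
        refine ⟨fun q hq => h1 (Or.inl hq), fun q hq => ?_⟩
        rcases h2 hq with (h | h) | h
        · exact Or.inl h
        · simp at h; subst h; simp
        · right; simp; right; exact h
      · subst hu
        refine ⟨h1, fun q hq => ?_⟩
        rcases h2 hq with h | h
        · exact Or.inl h
        · right; simp; right; exact h
    · rintro ⟨h1, h2⟩
      by_cases hp : p ∈ w
      · refine ⟨v ∪ {p}, by rw [rel_choice, rel_add]; exact Or.inl rfl, (ih _).mpr ⟨?_, ?_⟩⟩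
        · intro q hq; rcases hq with hq | hq
          · exact h1 hq
          · simp at hq; subst hq; exact hp
        · intro q hq
          rcases h2 hq with h | h
          · exact Or.inl (Or.inl h)
          · simp at h
            rcases h with h | h
            · subst h; left; right; rfl
            · right; exact h
      · refine ⟨v, by rw [rel_choice, rel_skip]; exact Or.inr rfl, (ih _).mpr ⟨h1, ?_⟩⟩
        intro q hq
        rcases h2 hq with h | h
        · exact Or.inl h
        · simp at h
          rcases h with h | h
          · subst h; exact absurd hq hp
          · right; exact h

end Helpers

noncomputable section Helpers2
open DLPA

variable {U : Type}

lemma rel_dis_fwd (L : List (U × U)) (v w : Val U) (h : Rel (dis L) v w) :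
    v ⊆ w ∧ (∀ p ∈ w, p ∈ v ∨ ∃ q ∈ L, p = PVar.att q.1 q.2 ∨ p = PVar.att q.2 q.1) ∧
      ∀ q ∈ L, PVar.att q.1 q.2 ∈ w ∨ PVar.att q.2 q.1 ∈ w := by
  induction L generalizing v with
  | nil =>
    rw [dis, seqList, rel_skip] at h
    subst h
    exact ⟨subset_rfl, fun p hp => Or.inl hp, by simp⟩
  | cons a L ih =>
    rw [dis, seqList, show seqList (fun q => Prog.choice (Prog.add (PVar.att q.1 q.2))
      (Prog.add (PVar.att q.2 q.1))) L = dis L from rfl, rel_seq] at h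
    obtain ⟨u, hu, hrest⟩ := h
    obtain ⟨h1, h2, h3⟩ := ih u hrest
    rw [rel_choice, rel_add, rel_add] at hu
    have husub : v ⊆ u := by rcases hu with hu | hu <;> (subst hu; exact Set.subset_union_left)
    have hin : PVar.att a.1 a.2 ∈ u ∨ PVar.att a.2 a.1 ∈ u := by
      rcases hu with hu | hu <;> subst hu
      · left; simp
      · right; simp
    refine ⟨husub.trans h1, fun p hp => ?_, fun q hq => ?_⟩
    · rcases h2 p hp with hp' | ⟨q, hq, hq'⟩
      · rcases hu with hu | hu <;> subst hu <;> rcases hp' with hp' | hp'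
        · exact Or.inl hp'
        · simp at hp'; subst hp'; exact Or.inr ⟨a, by simp, Or.inl rfl⟩
        · exact Or.inl hp'
        · simp at hp'; subst hp'; exact Or.inr ⟨a, by simp, Or.inr rfl⟩
      · exact Or.inr ⟨q, by simp [hq], hq'⟩
    · simp at hq
      rcases hq with hq | hq
      · subst hq; rcases hin with h | h
        · exact Or.inl (h1 h)
        · exact Or.inr (h1 h)
      · rcases h3 q hq with h | h
        · exact Or.inl h
        · exact Or.inr h

lemma rel_dis_of (L : List (U × U)) (f : U × U → PVar U)
    (hf : ∀ q ∈ L, f q = PVar.att q.1 q.2 ∨ f q = PVar.att q.2 q.1) (v : Val U) :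
    Rel (dis L) v (v ∪ f '' {q | q ∈ L}) := by
  induction L generalizing v with
  | nil =>
    rw [dis, seqList, rel_skip]
    simp
  | cons a L ih =>
    rw [dis, seqList, show seqList (fun q => Prog.choice (Prog.add (PVar.att q.1 q.2))
      (Prog.add (PVar.att q.2 q.1))) L = dis L from rfl, rel_seq]
    refine ⟨v ∪ {f a}, ?_, ?_⟩
    · rw [rel_choice, rel_add, rel_add]
      rcases hf a (by simp) with h | h
      · left; rw [h]
      · right; rw [h]
    · have := ih (fun q hq => hf q (by simp [hq])) (v ∪ {f a})
      have heq : (v ∪ {f a}) ∪ f '' {q | q ∈ L} = v ∪ f '' {q | q ∈ a :: L} := by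
        ext x
        simp only [Set.mem_union, Set.mem_image, Set.mem_setOf_eq, List.mem_cons,
          Set.mem_singleton_iff]
        constructor
        · rintro ((h | h) | ⟨q, hq, rfl⟩)
          · exact Or.inl h
          · exact Or.inr ⟨a, Or.inl rfl, h.symm⟩
          · exact Or.inr ⟨q, Or.inr hq, rfl⟩
        · rintro (h | ⟨q, (rfl | hq), rfl⟩)
          · exact Or.inl (Or.inl h)
          · exact Or.inl (Or.inr rfl)
          · exact Or.inr ⟨q, hq, rfl⟩
      rw [heq] at this
      exact this

end Helpers2

open DLPA in
/-- Proposition 4. -/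
theorem makeComp_rIAF_correct
    (U : Type) [Fintype U] [Nonempty U]
    (AF Aq : Finset U) (RF Rq Rl : Finset (U × U))
    (hrIAF : RIAFConds (AF : Set U) (Aq : Set U) (RF : Set (U × U)) (Rq : Set (U × U))
      (Rl : Set (U × U))) :
    (∀ v : Val U,
        Rel (Prog.seq (mkTrueSome (AWlist Aq))
              (Prog.seq (mkTrueSome (ATTlist Rq)) (dis Rl.toList)))
            (valOf (AF : Set U) (RF : Set (U × U))) v →
        IsCompletionOfRIAF (AF : Set U) (Aq : Set U) (RF : Set (U × U)) (Rq : Set (U × U))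
          (Rl : Set (U × U)) (Av v) (Rv v)) ∧
    (∀ (As : Set U) (Rs : Set (U × U)),
        IsCompletionOfRIAF (AF : Set U) (Aq : Set U) (RF : Set (U × U)) (Rq : Set (U × U))
          (Rl : Set (U × U)) As Rs →
        ∃ v : Val U,
          Rel (Prog.seq (mkTrueSome (AWlist Aq))
                (Prog.seq (mkTrueSome (ATTlist Rq)) (dis Rl.toList)))
              (valOf (AF : Set U) (RF : Set (U × U))) v ∧
          Av v = As ∧ Rv v = Rs) := by
  obtain ⟨hAdis, hRFRq, hRFRl, hRqRl, hRFsub, hRqsub, hRlsub, hRlsym, hRlirr⟩ := hrIAF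
  constructor
  · -- part (i)
    intro v hrel
    rw [rel_seq] at hrel
    obtain ⟨u1, h1, hrel⟩ := hrel
    rw [rel_seq] at hrel
    obtain ⟨u2, h2, h3⟩ := hrel
    rw [rel_mkTrueSome] at h1 h2
    obtain ⟨h1a, h1b⟩ := h1
    obtain ⟨h2a, h2b⟩ := h2
    obtain ⟨hd1, hd2, hd3⟩ := rel_dis_fwd _ _ _ h3
    have hsub : valOf (AF : Set U) (RF : Set (U × U)) ⊆ v := h1a.trans (h2a.trans hd1)
    -- membership characterization
    have hmem : ∀ p ∈ v, p ∈ valOf (AF : Set U) (RF : Set (U × U)) ∨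
        (∃ x ∈ Aq, p = PVar.aw x) ∨ (∃ q ∈ Rq, p = PVar.att q.1 q.2) ∨
        (∃ q ∈ Rl, p = PVar.att q.1 q.2 ∨ p = PVar.att q.2 q.1) := by
      intro p hp
      rcases hd2 p hp with hp2 | ⟨q, hq, hq'⟩
      · rcases h2b hp2 with hp1 | hp1
        · rcases h1b hp1 with hp0 | hp0
          · exact Or.inl hp0
          · simp only [Set.mem_setOf_eq, AWlist, List.mem_map, Finset.mem_toList] at hp0
            obtain ⟨x, hx, hx'⟩ := hp0
            exact Or.inr (Or.inl ⟨x, hx, hx'.symm⟩)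
        · simp only [Set.mem_setOf_eq, ATTlist, List.mem_map, Finset.mem_toList] at hp1
          obtain ⟨q, hq, hq'⟩ := hp1
          exact Or.inr (Or.inr (Or.inl ⟨q, hq, hq'.symm⟩))
      · exact Or.inr (Or.inr (Or.inr ⟨q, Finset.mem_toList.mp hq, hq'⟩))
    refine ⟨?_, ?_, ?_, ?_, ?_⟩
    · -- AF ⊆ Av v
      intro x hx
      exact hsub (Or.inl ⟨x, hx, rfl⟩)
    · -- Av v ⊆ AF ∪ Aq
      intro x hx
      rcases hmem _ hx with h | h | h | h
      · rcases h with ⟨a, ha, ha'⟩ | ⟨q, hq, hq'⟩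
        · simp only [PVar.aw.injEq] at ha'
          exact Or.inl (ha' ▸ ha)
        · simp at hq'
      · obtain ⟨a, ha, ha'⟩ := h
        simp only [PVar.aw.injEq] at ha'
        exact Or.inr (ha' ▸ ha)
      · obtain ⟨q, _, hq'⟩ := h; simp at hq'
      · obtain ⟨q, _, hq'⟩ := h; rcases hq' with hq' | hq' <;> simp at hq'
    · -- RF ∩ Av v ×ˢ Av v ⊆ Rv v
      rintro ⟨x, y⟩ ⟨hR, hx, hy⟩
      exact ⟨hx, hy, hsub (Or.inr ⟨(x, y), hR, rfl⟩)⟩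
    · -- Rv v ⊆ (RF ∪ Rq ∪ Rl) ∩ Av v ×ˢ Av v
      rintro ⟨x, y⟩ ⟨hx, hy, hatt⟩
      refine ⟨?_, hx, hy⟩
      rcases hmem _ hatt with h | h | h | h
      · rcases h with ⟨a, _, ha'⟩ | ⟨q, hq, hq'⟩
        · simp at ha'
        · simp only [PVar.att.injEq] at hq'
          left; left
          obtain ⟨h1, h2⟩ := hq'
          rw [show (x, y) = q from Prod.ext h1.symm h2.symm]
          exact hq
      · obtain ⟨a, _, ha'⟩ := h; simp at ha'
      · obtain ⟨q, hq, hq'⟩ := h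
        simp only [PVar.att.injEq] at hq'
        left; right
        obtain ⟨h1, h2⟩ := hq'
        rw [show (x, y) = q from Prod.ext h1 h2]
        exact hq
      · obtain ⟨q, hq, hq'⟩ := h
        right
        rcases hq' with hq' | hq' <;> simp only [PVar.att.injEq] at hq'
        · obtain ⟨h1, h2⟩ := hq'
          rw [show (x, y) = q from Prod.ext h1 h2]
          exact hq
        · obtain ⟨h1, h2⟩ := hq'
          have : (x, y) = (q.2, q.1) := Prod.ext h1 h2
          rw [this]
          exact hRlsym q.1 q.2 hq
    · -- Rl condition
      intro x y hx hy hRlxy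
      rcases hd3 (x, y) (Finset.mem_toList.mpr hRlxy) with h | h
      · exact Or.inl ⟨hx, hy, h⟩
      · exact Or.inr ⟨hy, hx, h⟩
  · -- part (ii)
    intro As Rs hc
    obtain ⟨c1, c2, c3, c4, c5⟩ := hc
    classical
    set f : U × U → PVar U := fun q =>
      if (q.2, q.1) ∈ Rs ∧ (q.1, q.2) ∉ Rs then PVar.att q.2 q.1 else PVar.att q.1 q.2
      with hf_def
    have hf : ∀ q ∈ Rl.toList, f q = PVar.att q.1 q.2 ∨ f q = PVar.att q.2 q.1 := by
      intro q _
      rw [hf_def]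
      dsimp only
      split_ifs with h
      · exact Or.inr rfl
      · exact Or.inl rfl
    set v0 : Val U := valOf (AF : Set U) (RF : Set (U × U)) with hv0
    set u1 : Val U := v0 ∪ PVar.aw '' As with hu1
    set u2 : Val U := u1 ∪ (fun q : U × U => PVar.att q.1 q.2) '' (Rs ∩ (Rq : Set (U × U)))
      with hu2
    set v : Val U := u2 ∪ f '' {q | q ∈ Rl.toList} with hv
    have hawv : ∀ x : U, PVar.aw x ∈ v ↔ x ∈ As := by
      intro x
      constructor
      · intro hx
        rcases hx with ((h | h) | h) | h
        · rcases h with ⟨a, ha, ha'⟩ | ⟨q, hq, hq'⟩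
          · simp only [PVar.aw.injEq] at ha'
            exact c1 (ha' ▸ ha)
          · simp at hq'
        · obtain ⟨a, ha, ha'⟩ := h
          simp only [PVar.aw.injEq] at ha'
          exact ha' ▸ ha
        · obtain ⟨q, _, hq'⟩ := h; simp at hq'
        · obtain ⟨q, hq, hq'⟩ := h
          rcases hf q hq with h' | h' <;> rw [h'] at hq' <;> simp at hq'
      · intro hx
        exact Or.inl (Or.inl (Or.inr ⟨x, hx, rfl⟩))
    have hattv : ∀ x y : U, x ∈ As → y ∈ As → (PVar.att x y ∈ v ↔ (x, y) ∈ Rs) := by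
      intro x y hx hy
      constructor
      · intro h
        rcases h with ((h | h) | h) | h
        · rcases h with ⟨a, _, ha'⟩ | ⟨q, hq, hq'⟩
          · simp at ha'
          · simp only [PVar.att.injEq] at hq'
            obtain ⟨e1, e2⟩ := hq'
            have : (x, y) ∈ (RF : Set (U × U)) := by
              rw [show (x, y) = q from (Prod.ext e1 e2).symm]; exact hq
            exact c3 ⟨this, hx, hy⟩
        · obtain ⟨a, _, ha'⟩ := h; simp at ha'
        · obtain ⟨q, hq, hq'⟩ := h
          simp only [PVar.att.injEq] at hq'
          obtain ⟨e1, e2⟩ := hq'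
          rw [show (x, y) = q from (Prod.ext e1 e2).symm]
          exact hq.1
        · obtain ⟨q, hq, hq'⟩ := h
          have hqRl : (q.1, q.2) ∈ (Rl : Set (U × U)) := by
            simpa using Finset.mem_toList.mp hq
          rw [hf_def] at hq'
          dsimp only at hq'
          split_ifs at hq' with hcond
          · simp only [PVar.att.injEq] at hq'
            obtain ⟨e1, e2⟩ := hq'
            rw [show (x, y) = (q.2, q.1) from (Prod.ext e1 e2).symm]
            exact hcond.1
          · simp only [PVar.att.injEq] at hq'
            obtain ⟨e1, e2⟩ := hq'
            have hxy : (x, y) = (q.1, q.2) := (Prod.ext e1 e2).symm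
            rw [hxy]
            rcases c5 q.1 q.2 (by rw [e1]; exact hx) (by rw [e2]; exact hy) hqRl with h' | h'
            · exact h'
            · by_contra hn
              exact hcond ⟨h', hn⟩
      · intro h
        have := c4 h
        obtain ⟨hmem, _, _⟩ := this
        rcases hmem with (hmem | hmem) | hmem
        · exact Or.inl (Or.inl (Or.inl (Or.inr ⟨(x, y), hmem, rfl⟩)))
        · exact Or.inl (Or.inr ⟨(x, y), ⟨h, hmem⟩, rfl⟩)
        · refine Or.inr ⟨(x, y), Finset.mem_toList.mpr hmem, ?_⟩
          rw [hf_def]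
          dsimp only
          rw [if_neg]
          rintro ⟨_, hn⟩
          exact hn h
    refine ⟨v, ?_, ?_, ?_⟩
    · rw [rel_seq]
      refine ⟨u1, ?_, ?_⟩
      · rw [rel_mkTrueSome]
        refine ⟨Set.subset_union_left, ?_⟩
        rintro p (hp | ⟨x, hx, rfl⟩)
        · exact Or.inl hp
        · rcases c2 hx with h | h
          · exact Or.inl (Or.inl ⟨x, h, rfl⟩)
          · right
            simp only [Set.mem_setOf_eq, AWlist, List.mem_map, Finset.mem_toList]
            exact ⟨x, h, rfl⟩
      · rw [rel_seq]
        refine ⟨u2, ?_, ?_⟩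
        · rw [rel_mkTrueSome]
          refine ⟨Set.subset_union_left, ?_⟩
          rintro p (hp | ⟨q, hq, rfl⟩)
          · exact Or.inl hp
          · right
            simp only [Set.mem_setOf_eq, ATTlist, List.mem_map, Finset.mem_toList]
            exact ⟨q, by simpa using hq.2, rfl⟩
        · exact rel_dis_of _ f hf u2
    · ext x
      exact hawv x
    · ext ⟨x, y⟩
      constructor
      · rintro ⟨hx, hy, hatt⟩
        rw [show (x, y).1 = x from rfl] at hx hatt
        rw [show (x, y).2 = y from rfl] at hy hatt
        have hx' := (hawv x).mp hx
        have hy' := (hawv y).mp hy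
        exact (hattv x y hx' hy').mp hatt
      · intro h
        obtain ⟨_, hx, hy⟩ := c4 h
        exact ⟨(hawv x).mpr hx, (hawv y).mpr hy, (hattv x y hx hy).mpr h⟩
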